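/- arXiv:1806.03076 — 4 statements merged into one kernel-verified Lean document; each statement's English description precedes it below -/
import Mathlib

section
/- There exists a constant C > 0, depending only on the dimension n, with the following property: for every cube Q = x₀ + (−r, r)ⁿ ⊂ ℝⁿ (x₀ ∈ ℝⁿ, r > 0), every Lebesgue-measurable set ω ⊂ Q with λⁿ(ω) ≤ λⁿ(Q)/4, and every affine map a : ℝⁿ → ℝⁿ, one has λⁿ(Q) · sup_{x ∈ Q} ‖a(x)‖ ≤ C ∫_{Q \ ω} ‖a(x)‖ dx. -/
open MeasureTheory RealInnerProductSpace

lemma vol_box (n : ℕ) (c d : Fin n → ℝ) :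
    volume {x : EuclideanSpace ℝ (Fin n) | ∀ i, x i ∈ Set.Ioo (c i) (d i)} =
      ∏ i, ENNReal.ofReal (d i - c i) := by
  have h := (EuclideanSpace.volume_preserving_symm_measurableEquiv_toLp (Fin n)).measure_preimage
    (s := Set.univ.pi fun i => Set.Ioo (c i) (d i))
    ((MeasurableSet.univ_pi fun i => measurableSet_Ioo).nullMeasurableSet)
  have heq : (⇑(MeasurableEquiv.toLp 2 (Fin n → ℝ)).symm ⁻¹'
      (Set.univ.pi fun i => Set.Ioo (c i) (d i))) =
      {x : EuclideanSpace ℝ (Fin n) | ∀ i, x i ∈ Set.Ioo (c i) (d i)} := by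
    ext x; simp [Set.mem_pi]
  rw [heq] at h
  rw [h, volume_pi_pi]
  simp [Real.volume_Ioo]

lemma meas_box (n : ℕ) (c d : Fin n → ℝ) :
    MeasurableSet {x : EuclideanSpace ℝ (Fin n) | ∀ i, x i ∈ Set.Ioo (c i) (d i)} := by
  have : {x : EuclideanSpace ℝ (Fin n) | ∀ i, x i ∈ Set.Ioo (c i) (d i)} =
      ⋂ i, (fun x : EuclideanSpace ℝ (Fin n) => x i) ⁻¹' Set.Ioo (c i) (d i) := by
    ext x; simp
  rw [this]
  exact MeasurableSet.iInter fun i =>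
    ((EuclideanSpace.proj i : EuclideanSpace ℝ (Fin n) →L[ℝ] ℝ).continuous.measurable)
      measurableSet_Ioo

set_option maxHeartbeats 1000000 in
/-- There is a constant `C > 0`, depending only on the dimension `n`,
such that for every open cube `Q = x₀ + (−r,r)ⁿ`, every measurable `ω ⊆ Q` with
`λⁿ(ω) ≤ λⁿ(Q)/4`, and every affine map `a : ℝⁿ → ℝⁿ`, one has
`λⁿ(Q) · sup_{x ∈ Q} ‖a(x)‖ ≤ C ∫_{Q \ ω} ‖a(x)‖ dx`. -/
theorem stmt_1 (n : ℕ) :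
    ∃ C : ℝ, 0 < C ∧
      ∀ (x₀ : EuclideanSpace ℝ (Fin n)) (r : ℝ), 0 < r →
        ∀ Q : Set (EuclideanSpace ℝ (Fin n)),
          Q = {x | ∀ i, x i ∈ Set.Ioo (x₀ i - r) (x₀ i + r)} →
          ∀ ω : Set (EuclideanSpace ℝ (Fin n)), MeasurableSet ω → ω ⊆ Q →
            volume ω ≤ volume Q / 4 →
            ∀ a : EuclideanSpace ℝ (Fin n) →ᵃ[ℝ] EuclideanSpace ℝ (Fin n),
              (volume Q).toReal * (⨆ x ∈ Q, ‖a x‖) ≤ C * ∫ x in Q \ ω, ‖a x‖ := by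
  set N : ℝ := (n : ℝ) + 1 with hN
  have hN1 : (1:ℝ) ≤ N := by
    have : (0:ℝ) ≤ (n:ℝ) := Nat.cast_nonneg n
    simp only [hN]; linarith
  have hNpos : (0:ℝ) < N := by linarith
  refine ⟨384 * N, by positivity, ?_⟩
  intro x₀ r hr Q hQ ω hωm hωQ hωv a
  have hacont : Continuous a := a.continuous_of_finiteDimensional
  set L : EuclideanSpace ℝ (Fin n) →L[ℝ] EuclideanSpace ℝ (Fin n) :=
    LinearMap.toContinuousLinearMap a.linear with hLdef
  have hLa : ∀ x : EuclideanSpace ℝ (Fin n), a x - a x₀ = L (x - x₀) := by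
    intro x
    exact (a.linearMap_vsub x x₀).symm
  set m : ℝ := ‖a x₀‖ with hm
  have hm0 : 0 ≤ m := norm_nonneg _
  set s : ℝ := Real.sqrt n with hs
  have hs0 : 0 ≤ s := Real.sqrt_nonneg _
  have hss : s * s = n := Real.mul_self_sqrt (Nat.cast_nonneg n)
  have hx₀Q : x₀ ∈ Q := by rw [hQ]; intro i; constructor <;> simp <;> linarith
  have hQmeas : MeasurableSet Q := hQ ▸ meas_box n _ _
  have hQvol : volume Q = ENNReal.ofReal ((2*r)^n) := by
    rw [hQ, vol_box]
    have : ∀ i : Fin n, ENNReal.ofReal (x₀ i + r - (x₀ i - r)) = ENNReal.ofReal (2*r) := by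
      intro i; congr 1; ring
    rw [Finset.prod_congr rfl (fun i _ => this i), Finset.prod_const, Finset.card_fin,
      ← ENNReal.ofReal_pow (by linarith)]
  have hQfin : volume Q ≠ ⊤ := by rw [hQvol]; exact ENNReal.ofReal_ne_top
  set tQ : ℝ := (volume Q).toReal with htQ
  have htQpos : 0 < tQ := by
    rw [htQ, hQvol, ENNReal.toReal_ofReal (by positivity)]; positivity
  have hdiff : ∀ x ∈ Q, ‖x - x₀‖ ≤ s * r := by
    intro x hx
    rw [hQ] at hx
    rw [EuclideanSpace.norm_eq]
    have hsum : ∑ i, ‖(x - x₀) i‖^2 ≤ ∑ _i : Fin n, r^2 := by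
      apply Finset.sum_le_sum
      intro i _
      have h1 := (hx i).1
      have h2 := (hx i).2
      have hle : ‖(x - x₀) i‖ ≤ r := by
        simp only [PiLp.sub_apply]
        rw [Real.norm_eq_abs, abs_le]
        constructor <;> linarith
      nlinarith [norm_nonneg ((x-x₀) i)]
    have h2 : (∑ _i : Fin n, r^2) = (n : ℝ) * r^2 := by
      rw [Finset.sum_const, Finset.card_fin]; simp [mul_comm]
    calc Real.sqrt (∑ i, ‖(x - x₀) i‖^2) ≤ Real.sqrt ((n:ℝ) * r^2) := by
          rw [← h2]; exact Real.sqrt_le_sqrt hsum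
      _ = s * r := by
          rw [Real.sqrt_mul (Nat.cast_nonneg n), Real.sqrt_sq hr.le]
  have hub : ∀ x ∈ Q, ‖a x‖ ≤ m + ‖L‖ * (s * r) := by
    intro x hx
    have h1 : ‖a x - a x₀‖ ≤ ‖L‖ * (s * r) := by
      rw [hLa x]
      calc ‖L (x - x₀)‖ ≤ ‖L‖ * ‖x - x₀‖ := L.le_opNorm _
        _ ≤ ‖L‖ * (s * r) := by
            exact mul_le_mul_of_nonneg_left (hdiff x hx) (norm_nonneg _)
    have h2 : ‖a x‖ ≤ m + ‖a x - a x₀‖ := by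
      have := norm_add_le (a x₀) (a x - a x₀)
      simpa [hm] using this
    linarith
  set M : ℝ := ⨆ x ∈ Q, ‖a x‖ with hM
  have hB0 : 0 ≤ m + ‖L‖ * (s*r) := by positivity
  have hbd : ∀ x : EuclideanSpace ℝ (Fin n), (⨆ _ : x ∈ Q, ‖a x‖) ≤ m + ‖L‖ * (s*r) := by
    intro x
    exact Real.iSup_le (fun hx => hub x hx) hB0
  have hMle : M ≤ m + ‖L‖ * (s*r) := Real.iSup_le hbd hB0
  have hleM : ∀ x ∈ Q, ‖a x‖ ≤ M := by
    intro x hx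
    have h1 : (⨆ _ : x ∈ Q, ‖a x‖) ≤ M :=
      le_ciSup (f := fun x => ⨆ _ : x ∈ Q, ‖a x‖) ⟨_, Set.forall_mem_range.2 hbd⟩ x
    rw [ciSup_pos hx] at h1
    exact h1
  have hmM : m ≤ M := hleM x₀ hx₀Q
  have hM0 : 0 ≤ M := le_trans hm0 hmM
  have haint : IntegrableOn (fun x => ‖a x‖) Q volume := by
    apply Measure.integrableOn_of_bounded hQfin hacont.norm.aestronglyMeasurable
      (M := m + ‖L‖ * (s*r))
    filter_upwards [ae_restrict_mem hQmeas] with x hx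
    rw [Real.norm_eq_abs, abs_of_nonneg (norm_nonneg _)]
    exact hub x hx
  set τ : ℝ := 1 / (32 * N) with hτ
  have hτpos : 0 < τ := by positivity
  obtain ⟨G, hGQ, hGmeas, hGvol, hGlb⟩ :
      ∃ G ⊆ Q, MeasurableSet G ∧ volume Q / 3 ≤ volume G ∧ ∀ x ∈ G, τ * M ≤ ‖a x‖ := by
    have hdiv3 : ∀ A : Set (EuclideanSpace ℝ (Fin n)), volume Q ≤ 3 * volume A →
        volume Q / 3 ≤ volume A := by
      intro A hA
      rw [ENNReal.div_le_iff_le_mul (Or.inl (by norm_num)) (Or.inl (by norm_num))]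
      rw [mul_comm] at hA
      exact hA
    by_cases hcase : τ * M ≤ m
    · -- Case 1 : value at center is large; use reflection
      set G : Set (EuclideanSpace ℝ (Fin n)) := {x ∈ Q | m ≤ ‖a x‖} with hG
      have hGmeas : MeasurableSet G :=
        hQmeas.inter (hacont.norm.measurable measurableSet_Ici)
      set ρ : EuclideanSpace ℝ (Fin n) → EuclideanSpace ℝ (Fin n) :=
        fun x => (x₀ + x₀) - x with hρ
      have hρQ : ∀ x ∈ Q, ρ x ∈ Q := by
        intro x hx
        rw [hQ] at hx ⊢
        intro i
        have h1 := (hx i).1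
        have h2 := (hx i).2
        have : ρ x i = x₀ i + x₀ i - x i := by simp [hρ]
        rw [this]
        constructor <;> [skip; skip] <;> simp at h1 h2 ⊢ <;> linarith
      have hmid : ∀ x, m ≤ 2⁻¹ * (‖a x‖ + ‖a (ρ x)‖) := by
        intro x
        have hx₀ : x₀ = midpoint ℝ x (ρ x) := by
          rw [midpoint_eq_smul_add, hρ]
          simp only
          rw [show x + (x₀ + x₀ - x) = x₀ + x₀ by abel]
          rw [invOf_eq_inv]
          module
        have := a.map_midpoint x (ρ x)
        rw [← hx₀, midpoint_eq_smul_add, invOf_eq_inv] at this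
        calc m = ‖a x₀‖ := hm
          _ = ‖(2⁻¹:ℝ) • (a x + a (ρ x))‖ := by rw [this]
          _ = 2⁻¹ * ‖a x + a (ρ x)‖ := by
              rw [norm_smul]; norm_num
          _ ≤ 2⁻¹ * (‖a x‖ + ‖a (ρ x)‖) := by
              have := norm_add_le (a x) (a (ρ x))
              linarith
      have hcover : Q ⊆ G ∪ ρ ⁻¹' G := by
        intro x hx
        by_cases hax : m ≤ ‖a x‖
        · exact Or.inl ⟨hx, hax⟩
        · right
          refine ⟨hρQ x hx, ?_⟩
          push_neg at hax
          have := hmid x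
          show m ≤ ‖a (ρ x)‖
          linarith
      have hρvol : volume (ρ ⁻¹' G) = volume G := by
        have : ρ ⁻¹' G = Neg.neg ⁻¹' ((fun y => (x₀ + x₀) + y) ⁻¹' G) := by
          ext x; simp [hρ, sub_eq_add_neg]
        rw [this, Measure.measure_preimage_neg, measure_preimage_add]
      refine ⟨G, fun x hx => hx.1, hGmeas, hdiv3 G ?_, fun x hx => le_trans hcase hx.2⟩
      calc volume Q ≤ volume (G ∪ ρ ⁻¹' G) := measure_mono hcover
        _ ≤ volume G + volume (ρ ⁻¹' G) := measure_union_le _ _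
        _ = volume G + volume G := by rw [hρvol]
        _ = 2 * volume G := (two_mul _).symm
        _ ≤ 3 * volume G := mul_le_mul_left (by norm_num) _
    · -- Case 2
      push_neg at hcase
      have hMpos : 0 < M := by
        by_contra hcon
        push_neg at hcon
        have : τ * M ≤ 0 := mul_nonpos_of_nonneg_of_nonpos hτpos.le hcon
        linarith
      have hL1 : (1 - τ) * M ≤ ‖L‖ * (s * r) := by linarith
      have hτhalf : τ ≤ 1/2 := by
        rw [hτ]
        rw [div_le_div_iff₀ (by positivity) (by norm_num)]
        linarith
      have hLsr : 0 < ‖L‖ * (s * r) := by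
        have h1 : (0:ℝ) < (1 - τ) * M := mul_pos (by linarith) hMpos
        linarith
      have hspos : 0 < s := by
        rcases lt_or_ge 0 s with h | h
        · exact h
        · exfalso
          have h0 : s = 0 := le_antisymm h hs0
          rw [h0, zero_mul, mul_zero] at hLsr
          exact lt_irrefl _ hLsr
      have hLpos : 0 < ‖L‖ := by
        rcases lt_or_ge 0 ‖L‖ with h | h
        · exact h
        · exfalso
          have h1 : ‖L‖ * (s * r) ≤ 0 :=
            mul_nonpos_of_nonpos_of_nonneg h (mul_nonneg hs0 hr.le)
          linarith
      have hnpos : 0 < (n:ℝ) := hss ▸ mul_pos hspos hspos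
      have hn1 : 1 ≤ n := by exact_mod_cast Nat.one_le_cast.2 (by exact_mod_cast Nat.cast_pos.1 hnpos)
      obtain ⟨u, hu1, hu2⟩ := L.exists_lt_apply_of_lt_opNorm (r := ‖L‖/2) (by linarith)
      have hLu : 0 < ‖L u‖ := lt_of_le_of_lt (by positivity) hu2
      set v : EuclideanSpace ℝ (Fin n) := ‖L u‖⁻¹ • L u with hv
      have hvnorm : ‖v‖ = 1 := by
        rw [hv, norm_smul, norm_inv, norm_norm, inv_mul_cancel₀ hLu.ne']
      set w0 : EuclideanSpace ℝ (Fin n) := (ContinuousLinearMap.adjoint L) v with hw0def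
      have hw0 : ∀ y, ⟪w0, y⟫ = ⟪v, L y⟫ := fun y =>
        ContinuousLinearMap.adjoint_inner_left L y v
      have hvLy : ∀ y, |⟪v, L y⟫| ≤ ‖L y‖ := by
        intro y
        calc |⟪v, L y⟫| ≤ ‖v‖ * ‖L y‖ := abs_real_inner_le_norm v (L y)
          _ = ‖L y‖ := by rw [hvnorm, one_mul]
      have hwu : ⟪w0, u⟫ = ‖L u‖ := by
        rw [hw0 u, hv, real_inner_smul_left, real_inner_self_eq_norm_mul_norm]
        field_simp
      have hwnorm : ‖L‖/2 ≤ ‖w0‖ := by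
        have h1 : ⟪w0, u⟫ ≤ ‖w0‖ * ‖u‖ := real_inner_le_norm w0 u
        have h2 : ‖w0‖ * ‖u‖ ≤ ‖w0‖ * 1 :=
          mul_le_mul_of_nonneg_left (by linarith) (norm_nonneg w0)
        rw [mul_one] at h2
        linarith
      have hw0pos : 0 < ‖w0‖ := by linarith
      have hnorm2 : ‖w0‖^2 = ∑ j, (w0 j)^2 := by
        rw [EuclideanSpace.norm_eq, Real.sq_sqrt (Finset.sum_nonneg fun j _ => sq_nonneg _)]
        congr 1
        ext j
        rw [Real.norm_eq_abs, sq_abs]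
      obtain ⟨i, hi⟩ : ∃ i : Fin n, ‖w0‖ ≤ s * |w0 i| := by
        by_contra hcon
        push_neg at hcon
        haveI : Nonempty (Fin n) := ⟨⟨0, hn1⟩⟩
        have hsum : ∑ j, (w0 j)^2 < ∑ _j : Fin n, ‖w0‖^2 / n := by
          apply Finset.sum_lt_sum_of_nonempty Finset.univ_nonempty
          intro j _
          have h1 := hcon j
          have h2 : (s*|w0 j|)^2 < ‖w0‖^2 := by
            nlinarith [abs_nonneg (w0 j), mul_nonneg hs0 (abs_nonneg (w0 j))]
          rw [lt_div_iff₀ hnpos, ← hss]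
          nlinarith [sq_abs (w0 j)]
        rw [Finset.sum_const, Finset.card_fin] at hsum
        have : (n:ℝ) * (‖w0‖^2/n) = ‖w0‖^2 := by field_simp
        rw [nsmul_eq_mul, this] at hsum
        rw [hnorm2] at hsum
        exact lt_irrefl _ hsum
      -- sign normalization
      set σ : ℝ := if 0 ≤ w0 i then 1 else -1 with hσdef
      have hσabs : |σ| = 1 := by
        rw [hσdef]; split_ifs <;> norm_num
      set w : EuclideanSpace ℝ (Fin n) := σ • w0 with hwdef
      have hwi : w i = |w0 i| := by
        rw [hwdef]
        simp only [PiLp.smul_apply, smul_eq_mul, hσdef]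
        split_ifs with h
        · rw [one_mul, abs_of_nonneg h]
        · rw [neg_one_mul, abs_of_neg (lt_of_not_ge h)]
      have habs : ∀ y, |⟪w, y⟫| = |⟪w0, y⟫| := by
        intro y
        rw [hwdef, real_inner_smul_left, abs_mul, hσabs, one_mul]
      have hwi2 : ‖w0‖ ≤ s * w i := by rw [hwi]; exact hi
      have hwipos : 0 < w i := by
        by_contra hcon
        push_neg at hcon
        have : s * w i ≤ 0 := mul_nonpos_of_nonneg_of_nonpos hs0 hcon
        linarith
      -- the good and bad sets
      set c : ℝ := (1/(4*s)) * r * ‖w0‖ with hcdef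
      have hcpos : 0 < c := by
        rw [hcdef]; positivity
      have hfcont : Continuous fun x : EuclideanSpace ℝ (Fin n) => |⟪w, x - x₀⟫| :=
        (continuous_const.inner (continuous_id.sub continuous_const)).abs
      set G : Set (EuclideanSpace ℝ (Fin n)) := {x ∈ Q | c ≤ |⟪w, x - x₀⟫|} with hGdef
      set S : Set (EuclideanSpace ℝ (Fin n)) := {x ∈ Q | |⟪w, x - x₀⟫| < c} with hSdef
      have hGmeas : MeasurableSet G := hQmeas.inter (hfcont.measurable measurableSet_Ici)
      have hSmeas : MeasurableSet S := hQmeas.inter (hfcont.measurable measurableSet_Iio)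
      have hGQ : G ⊆ Q := fun x hx => hx.1
      have hSQ : S ⊆ Q := fun x hx => hx.1
      have hcover : Q ⊆ G ∪ S := by
        intro x hx
        rcases le_or_gt c |⟪w, x - x₀⟫| with h | h
        · exact Or.inl ⟨hx, h⟩
        · exact Or.inr ⟨hx, h⟩
      -- lower bound for ‖a x‖ on G
      have hGlb : ∀ x ∈ G, τ * M ≤ ‖a x‖ := by
        intro x hx
        have h1 : ‖L (x - x₀)‖ ≤ ‖a x‖ + m := by
          rw [← hLa x]
          exact norm_sub_le (a x) (a x₀)
        have h2 : |⟪w, x - x₀⟫| ≤ ‖L (x - x₀)‖ := by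
          rw [habs, hw0]
          exact hvLy _
        have h3 : c ≤ ‖a x‖ + m := le_trans hx.2 (h2.trans h1)
        have e1 : c * (8*(n:ℝ)) = 2*(s*r*‖w0‖) := by
          rw [hcdef, ← hss]
          field_simp
          ring
        have e2 : (1-τ)*M ≤ 2*(s*r*‖w0‖) := by
          have h1 : ‖L‖ * (s*r) ≤ (2*‖w0‖) * (s*r) :=
            mul_le_mul_of_nonneg_right (by linarith) (mul_pos hspos hr).le
          have h2 : (2*‖w0‖) * (s*r) = 2*(s*r*‖w0‖) := by ring
          linarith
        have h32 : 32*(n:ℝ)*τ ≤ 1 := by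
          rw [hτ, hN]
          rw [mul_one_div, div_le_one (by positivity)]
          linarith
        have e3 : 2*τ*M*(8*(n:ℝ)) ≤ (1-τ)*M := by
          have e3a : 16*((n:ℝ)*τ) ≤ 1/2 := by linarith
          have e3b : (16*((n:ℝ)*τ))*M ≤ (1/2)*M := mul_le_mul_of_nonneg_right e3a hM0
          have e3c : (1/2)*M ≤ (1-τ)*M := mul_le_mul_of_nonneg_right (by linarith) hM0
          have e3d : 2*τ*M*(8*(n:ℝ)) = (16*((n:ℝ)*τ))*M := by ring
          linarith
        have e4 : 2*τ*M*(8*(n:ℝ)) ≤ c * (8*(n:ℝ)) := by linarith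
        have e5 : 2*τ*M ≤ c := by
          have h8 : 0 < 8*(n:ℝ) := by positivity
          exact le_of_mul_le_mul_right e4 h8
        linarith
      -- translate vector
      set vi : EuclideanSpace ℝ (Fin n) := r • EuclideanSpace.single i (1:ℝ) with hvidef
      have hvinner : ⟪w, vi⟫ = r * w i := by
        rw [hvidef, real_inner_smul_right, EuclideanSpace.inner_single_right]
        simp
      have hvicoord : ∀ l, vi l = if l = i then r else 0 := by
        intro l
        rw [hvidef]
        simp only [PiLp.smul_apply, smul_eq_mul, EuclideanSpace.single_apply]
        split_ifs <;> simp
      set T : ℕ → Set (EuclideanSpace ℝ (Fin n)) :=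
        fun j => (fun x => x + (-((j:ℝ) • vi))) ⁻¹' S with hTdef
      have hTvol : ∀ j, volume (T j) = volume S := fun j =>
        measure_preimage_add_right volume _ S
      have hTmeas : ∀ j, MeasurableSet (T j) := fun j =>
        hSmeas.preimage (measurable_id.add_const _)
      have hTinner : ∀ (j : ℕ) x, x ∈ T j → |⟪w, x - x₀⟫ - (j:ℝ) * (r * w i)| < c := by
        intro j x hx
        have hx' : x + (-((j:ℝ) • vi)) ∈ S := hx
        have := hx'.2
        have heq : ⟪w, (x + (-((j:ℝ) • vi))) - x₀⟫ = ⟪w, x - x₀⟫ - (j:ℝ) * (r * w i) := by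
          rw [show (x + (-((j:ℝ) • vi))) - x₀ = (x - x₀) - (j:ℝ) • vi by abel]
          rw [inner_sub_right, real_inner_smul_right, hvinner]
        rwa [heq] at this
      have hTdisj : ∀ (j k : ℕ), j < k → Disjoint (T j) (T k) := by
        intro j k hjk
        rw [Set.disjoint_left]
        intro x hxj hxk
        have h1 := hTinner j x hxj
        have h2 := hTinner k x hxk
        have hk1 : (1:ℝ) ≤ (k:ℝ) - (j:ℝ) := by
          have : (j:ℝ) + 1 ≤ (k:ℝ) := by exact_mod_cast hjk
          linarith
        have hc2 : c * 2 ≤ r * ‖w0‖ / s / 2 * 2 := by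
          rw [hcdef]
          have : 1/(4*s) * r * ‖w0‖ = r * ‖w0‖ / s / 4 := by
            field_simp
          rw [this]
          have h0 : 0 < r * ‖w0‖ / s := by positivity
          linarith
        have hrw : r * ‖w0‖ / s ≤ r * w i := by
          rw [div_le_iff₀ hspos]
          have h1 : r * ‖w0‖ ≤ r * (s * w i) := mul_le_mul_of_nonneg_left hwi2 hr.le
          have h2 : r * (s * w i) = r * w i * s := by ring
          linarith
        have habs1 : |(⟪w, x - x₀⟫ - (j:ℝ) * (r * w i)) - (⟪w, x - x₀⟫ - (k:ℝ) * (r * w i))| ≤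
            |⟪w, x - x₀⟫ - (j:ℝ) * (r * w i)| + |⟪w, x - x₀⟫ - (k:ℝ) * (r * w i)| :=
          abs_sub _ _
        have heq2 : (⟪w, x - x₀⟫ - (j:ℝ) * (r * w i)) - (⟪w, x - x₀⟫ - (k:ℝ) * (r * w i)) =
            ((k:ℝ) - (j:ℝ)) * (r * w i) := by ring
        rw [heq2] at habs1
        have hpos : 0 < r * w i := by positivity
        have h5 : ((k:ℝ) - (j:ℝ)) * (r * w i) ≤ |((k:ℝ) - (j:ℝ)) * (r * w i)| := le_abs_self _
        have h6 : r * w i ≤ ((k:ℝ) - (j:ℝ)) * (r * w i) := le_mul_of_one_le_left hpos.le hk1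
        linarith
      -- bounding box
      set B : Set (EuclideanSpace ℝ (Fin n)) :=
        {x | ∀ l, x l ∈ Set.Ioo (x₀ l - r) (x₀ l + r + (if l = i then 2*r else 0))} with hBdef
      have hTB : ∀ j : ℕ, j ≤ 2 → T j ⊆ B := by
        intro j hj x hx
        have hx' : x + (-((j:ℝ) • vi)) ∈ Q := hSQ hx
        rw [hQ] at hx'
        intro l
        have hl := hx' l
        have hcoord : (x + (-((j:ℝ) • vi))) l = x l - (j:ℝ) * (if l = i then r else 0) := by
          simp only [PiLp.add_apply, PiLp.neg_apply, PiLp.smul_apply, smul_eq_mul, hvicoord l]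
          ring
        rw [hcoord] at hl
        have hj2 : (j:ℝ) ≤ 2 := by exact_mod_cast hj
        have hj0 : (0:ℝ) ≤ (j:ℝ) := Nat.cast_nonneg j
        split_ifs with h
        · subst h
          norm_num [Set.mem_Ioo] at hl
          simp only [Set.mem_Ioo]
          have hjr0 : 0 ≤ (j:ℝ) * r := mul_nonneg hj0 hr.le
          have hjr2 : (j:ℝ) * r ≤ 2 * r := mul_le_mul_of_nonneg_right hj2 hr.le
          constructor <;> linarith
        · simp only [if_neg h, mul_zero, sub_zero] at hl
          simpa using hl
      have hBvol : volume B = 2 * volume Q := by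
        rw [hBdef, vol_box, hQvol]
        have hsplit : ∀ l : Fin n, ENNReal.ofReal (x₀ l + r + (if l = i then 2*r else 0) - (x₀ l - r)) =
            (if l = i then 2 else 1) * ENNReal.ofReal (2*r) := by
          intro l
          split_ifs with h
          · rw [show x₀ l + r + 2*r - (x₀ l - r) = 2*(2*r) by ring,
              ENNReal.ofReal_mul (by norm_num)]
            norm_num
          · rw [one_mul]
            congr 1
            ring
        rw [Finset.prod_congr rfl (fun l _ => hsplit l), Finset.prod_mul_distrib,
          Finset.prod_ite_eq' Finset.univ i (fun _ => (2:ENNReal)), if_pos (Finset.mem_univ i),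
          Finset.prod_const, Finset.card_fin, ← ENNReal.ofReal_pow (by linarith)]
      have hunion : 3 * volume S ≤ 2 * volume Q := by
        have hd01 : Disjoint (T 0) (T 1) := hTdisj 0 1 (by norm_num)
        have hd02 : Disjoint (T 0) (T 2) := hTdisj 0 2 (by norm_num)
        have hd12 : Disjoint (T 1) (T 2) := hTdisj 1 2 (by norm_num)
        have h1 : volume (T 0 ∪ T 1 ∪ T 2) = volume (T 0) + volume (T 1) + volume (T 2) := by
          rw [measure_union (by exact Set.disjoint_union_left.2 ⟨hd02, hd12⟩) (hTmeas 2),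
            measure_union hd01 (hTmeas 1)]
        have h2 : T 0 ∪ T 1 ∪ T 2 ⊆ B :=
          Set.union_subset (Set.union_subset (hTB 0 (by norm_num)) (hTB 1 (by norm_num)))
            (hTB 2 (by norm_num))
        calc 3 * volume S = volume (T 0) + volume (T 1) + volume (T 2) := by
              rw [hTvol 0, hTvol 1, hTvol 2]; ring
          _ = volume (T 0 ∪ T 1 ∪ T 2) := h1.symm
          _ ≤ volume B := measure_mono h2
          _ = 2 * volume Q := hBvol
      refine ⟨G, hGQ, hGmeas, hdiv3 G ?_, hGlb⟩
      have hQle : volume Q ≤ volume G + volume S :=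
        le_trans (measure_mono hcover) (measure_union_le _ _)
      have h3Q : 2 * volume Q + volume Q ≤ 2 * volume Q + 3 * volume G := by
        calc 2 * volume Q + volume Q = 3 * volume Q := by ring
          _ ≤ 3 * (volume G + volume S) := mul_le_mul_right hQle _
          _ = 3 * volume G + 3 * volume S := by ring
          _ ≤ 3 * volume G + 2 * volume Q := add_le_add_right hunion _
          _ = 2 * volume Q + 3 * volume G := by ring
      exact ENNReal.le_of_add_le_add_left (ENNReal.mul_ne_top (by norm_num) hQfin) h3Q
  -- final assembly
  have hGfin : volume G ≠ ⊤ := fun h => hQfin (top_le_iff.1 (h ▸ measure_mono hGQ))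
  set D : Set (EuclideanSpace ℝ (Fin n)) := G \ ω with hD
  have hDmeas : MeasurableSet D := hGmeas.diff hωm
  have hDQ : D ⊆ Q := Set.diff_subset.trans hGQ
  have hDsub : D ⊆ Q \ ω := Set.diff_subset_diff_left hGQ
  have hDfin : volume D ≠ ⊤ := fun h => hQfin (top_le_iff.1 (h ▸ measure_mono hDQ))
  have hωfin : volume ω ≠ ⊤ := fun h => hQfin (top_le_iff.1 (h ▸ measure_mono hωQ))
  have htω : (volume ω).toReal ≤ tQ / 4 := by
    have h4 : (volume Q / 4).toReal = tQ / 4 := by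
      rw [ENNReal.toReal_div]; norm_num; rfl
    rw [← h4]
    exact ENNReal.toReal_mono (ENNReal.div_lt_top hQfin (by norm_num)).ne hωv
  have htG : tQ / 3 ≤ (volume G).toReal := by
    have h3 : (volume Q / 3).toReal = tQ / 3 := by
      rw [ENNReal.toReal_div]; norm_num; rfl
    rw [← h3]
    exact ENNReal.toReal_mono hGfin hGvol
  have hsplit : (volume G).toReal ≤ (volume D).toReal + (volume ω).toReal := by
    have h1 : volume G ≤ volume D + volume ω := by
      calc volume G ≤ volume (D ∪ ω) := measure_mono (fun x hx => by
            by_cases hxω : x ∈ ω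
            · exact Or.inr hxω
            · exact Or.inl ⟨hx, hxω⟩)
        _ ≤ volume D + volume ω := measure_union_le _ _
    calc (volume G).toReal ≤ (volume D + volume ω).toReal :=
          ENNReal.toReal_mono (by simp [hDfin, hωfin]) h1
      _ = (volume D).toReal + (volume ω).toReal := ENNReal.toReal_add hDfin hωfin
  have htD : tQ / 12 ≤ (volume D).toReal := by linarith
  have hint1 : IntegrableOn (fun x => ‖a x‖) (Q \ ω) volume := haint.mono_set Set.diff_subset
  have hint2 : IntegrableOn (fun x => ‖a x‖) D volume := haint.mono_set hDQ
  have step2 : τ * M * (volume D).toReal ≤ ∫ x in D, ‖a x‖ :=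
    setIntegral_ge_of_const_le_real hDmeas hDfin (fun x hx => hGlb x hx.1) hint2
  have step1 : (∫ x in D, ‖a x‖) ≤ ∫ x in Q \ ω, ‖a x‖ :=
    setIntegral_mono_set hint1 (Filter.Eventually.of_forall fun x => norm_nonneg _)
      (HasSubset.Subset.eventuallyLE hDsub)
  have hτM : 0 ≤ τ * M := mul_nonneg hτpos.le hM0
  have hchain : τ * M * (tQ / 12) ≤ ∫ x in Q \ ω, ‖a x‖ := by
    calc τ * M * (tQ / 12) ≤ τ * M * (volume D).toReal := by
          exact mul_le_mul_of_nonneg_left htD hτM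
      _ ≤ ∫ x in D, ‖a x‖ := step2
      _ ≤ ∫ x in Q \ ω, ‖a x‖ := step1
  have hkey : tQ * M = 384 * N * (τ * M * (tQ / 12)) := by
    rw [hτ]
    field_simp
    ring
  rw [hkey]
  exact mul_le_mul_of_nonneg_left hchain (by positivity)
end

section
/- Let 0 < μ < ν < 1 and set q := (1+ν)/(ν−μ), and for λ ∈ (0,1) let A_λ := diag(1, …, 1, −λ). Let v : {x ∈ ℝⁿ : x_n ≤ 0} → ℝⁿ be continuous. Define v̂ : ℝⁿ → ℝⁿ by v̂(x) := v(x) when x_n ≤ 0 and v̂(x) := q·A_μ v(A_μ x) + (1−q)·A_ν v(A_ν x) when x_n > 0. Then v̂ is continuous on all of ℝⁿ. -/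
open Matrix

/-- The diagonal matrix `A_λ = diag(1, …, 1, −λ)` on `ℝ^{n+1}`. -/
noncomputable def Adiag (n : ℕ) (lam : ℝ) : Matrix (Fin (n + 1)) (Fin (n + 1)) ℝ :=
  Matrix.diagonal fun i => if i = Fin.last n then -lam else 1

/-- For `0 < μ < ν < 1`, `q := (1+ν)/(ν−μ)`, and a function `v`
continuous on the closed lower half-space `{xₙ ≤ 0}`, the extension
`v̂(x) = v(x)` for `xₙ ≤ 0` and `v̂(x) = q·A_μ v(A_μ x) + (1−q)·A_ν v(A_ν x)` for
`xₙ > 0` is continuous on all of `ℝⁿ`. -/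
theorem stmt_11 (n : ℕ) (μ ν : ℝ) (h0 : 0 < μ) (hμν : μ < ν) (h1 : ν < 1)
    (q : ℝ) (hq : q = (1 + ν) / (ν - μ))
    (v : (Fin (n + 1) → ℝ) → (Fin (n + 1) → ℝ))
    (hv : ContinuousOn v {x | x (Fin.last n) ≤ 0}) :
    Continuous (fun x : Fin (n + 1) → ℝ =>
      if x (Fin.last n) ≤ 0 then v x
      else
        q • (Adiag n μ).mulVec (v ((Adiag n μ).mulVec x)) +
          (1 - q) • (Adiag n ν).mulVec (v ((Adiag n ν).mulVec x))) := by
  have hνμ : ν - μ ≠ 0 := by linarith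
  -- retraction onto the closed lower half-space
  set r : (Fin (n + 1) → ℝ) → (Fin (n + 1) → ℝ) :=
    fun x => Function.update x (Fin.last n) (min (x (Fin.last n)) 0) with hrdef
  have hrcont : Continuous r := by
    refine continuous_pi fun i => ?_
    simp only [hrdef, Function.update_apply]
    split
    · exact (continuous_apply _).min continuous_const
    · exact continuous_apply i
  have hrmem : ∀ x, r x ∈ {x : Fin (n + 1) → ℝ | x (Fin.last n) ≤ 0} := by
    intro x
    simp [hrdef]
  have hrid : ∀ x : Fin (n + 1) → ℝ, x (Fin.last n) ≤ 0 → r x = x := by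
    intro x hx
    funext i
    rcases eq_or_ne i (Fin.last n) with h | h
    · subst h; simp [hrdef, hx]
    · simp [hrdef, Function.update_apply, h]
  have hmv : ∀ lam : ℝ, Continuous fun x : Fin (n + 1) → ℝ => (Adiag n lam).mulVec x := by
    intro lam
    refine continuous_pi fun i => ?_
    simp only [Adiag, Matrix.mulVec_diagonal]
    exact continuous_const.mul (continuous_apply i)
  have hmv_last : ∀ (lam : ℝ) (x : Fin (n + 1) → ℝ),
      ((Adiag n lam).mulVec x) (Fin.last n) = -lam * x (Fin.last n) := by
    intro lam x
    simp [Adiag, Matrix.mulVec_diagonal]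
  set w : (Fin (n + 1) → ℝ) → (Fin (n + 1) → ℝ) := fun x => v (r x) with hwdef
  have hwcont : Continuous w := hv.comp_continuous hrcont hrmem
  have hAx : ∀ (lam : ℝ) (x : Fin (n + 1) → ℝ), x (Fin.last n) = 0 →
      (Adiag n lam).mulVec x = x := by
    intro lam x hx
    funext i
    rcases eq_or_ne i (Fin.last n) with h | h
    · subst h; simp [Adiag, Matrix.mulVec_diagonal, hx]
    · simp [Adiag, Matrix.mulVec_diagonal, h]
  have key : (fun x : Fin (n + 1) → ℝ =>
      if x (Fin.last n) ≤ 0 then v x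
      else
        q • (Adiag n μ).mulVec (v ((Adiag n μ).mulVec x)) +
          (1 - q) • (Adiag n ν).mulVec (v ((Adiag n ν).mulVec x)))
      = (fun x : Fin (n + 1) → ℝ =>
      if x (Fin.last n) ≤ 0 then w x
      else
        q • (Adiag n μ).mulVec (w ((Adiag n μ).mulVec x)) +
          (1 - q) • (Adiag n ν).mulVec (w ((Adiag n ν).mulVec x))) := by
    funext x
    by_cases hx : x (Fin.last n) ≤ 0
    · simp only [hx, if_pos, hwdef, hrid x hx]
    · push_neg at hx
      have hμ' : ((Adiag n μ).mulVec x) (Fin.last n) ≤ 0 := by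
        rw [hmv_last]; nlinarith
      have hν' : ((Adiag n ν).mulVec x) (Fin.last n) ≤ 0 := by
        rw [hmv_last]; nlinarith
      simp only [if_neg (not_le.mpr hx), hwdef, hrid _ hμ', hrid _ hν']
  rw [key]
  refine Continuous.if_le ?_ ?_ (continuous_apply _) continuous_const ?_
  · exact hwcont
  · exact (((hmv μ).comp (hwcont.comp (hmv μ))).const_smul q).add
      (((hmv ν).comp (hwcont.comp (hmv ν))).const_smul (1 - q))
  · intro x hx
    have hAμ := hAx μ x hx
    have hAν := hAx ν x hx
    rw [hAμ, hAν]
    funext i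
    rcases eq_or_ne i (Fin.last n) with h | h
    · subst h
      simp only [Pi.add_apply, Pi.smul_apply, smul_eq_mul, Adiag, Matrix.mulVec_diagonal,
        if_pos rfl, if_true]
      have : q * (ν - μ) = 1 + ν := by rw [hq]; field_simp
      linear_combination (-(w x (Fin.last n))) * this
    · simp only [Pi.add_apply, Pi.smul_apply, smul_eq_mul, Adiag, Matrix.mulVec_diagonal,
        if_neg h]
      ring
end

section
/- Let 0 < μ < ν < 1 and set q := (1+ν)/(ν−μ), and for λ ∈ (0,1) let A_λ := diag(1, …, 1, −λ). Let v : {x ∈ ℝⁿ : x_n < 0} → ℝⁿ be differentiable and for x with x_n > 0 define v̂(x) := q·A_μ v(A_μ x) + (1−q)·A_ν v(A_ν x). Then v̂ is differentiable at every x with x_n > 0, its symmetric gradient satisfies e(v̂)(x) = q·A_μ e(v)(A_μ x) A_μ + (1−q)·A_ν e(v)(A_ν x) A_ν, and consequently ‖e(v̂)(x)‖_F ≤ q·‖e(v)(A_μ x)‖_F + (q−1)·‖e(v)(A_ν x)‖_F. -/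
open Matrix

/-- The symmetric part `(M + Mᵀ)/2` of a square matrix. -/
noncomputable def symPart {N : ℕ} (M : Matrix (Fin N) (Fin N) ℝ) :
    Matrix (Fin N) (Fin N) ℝ :=
  (1 / 2 : ℝ) • (M + Mᵀ)

/-- The Frobenius norm of a square matrix. -/
noncomputable def frobNorm {N : ℕ} (M : Matrix (Fin N) (Fin N) ℝ) : ℝ :=
  Real.sqrt (∑ i, ∑ j, (M i j) ^ 2)

lemma Adiag_tr (n : ℕ) (lam : ℝ) : (Adiag n lam)ᵀ = Adiag n lam := by
  simp [Adiag, Matrix.diagonal_transpose]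

lemma symPart_AMA (n : ℕ) (lam : ℝ) (M : Matrix (Fin (n+1)) (Fin (n+1)) ℝ) :
    symPart (Adiag n lam * M * Adiag n lam) = Adiag n lam * symPart M * Adiag n lam := by
  simp only [symPart, Matrix.transpose_mul, Adiag_tr, Matrix.mul_add, Matrix.add_mul,
    Matrix.mul_smul, Matrix.smul_mul, Matrix.mul_assoc]

lemma frob_eq {N : ℕ} (M : Matrix (Fin N) (Fin N) ℝ) :
    frobNorm M = ‖(WithLp.equiv 2 (Fin N × Fin N → ℝ)).symm (fun p => M p.1 p.2)‖ := by
  rw [EuclideanSpace.norm_eq, frobNorm, Fintype.sum_prod_type]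
  congr 1
  simp [sq_abs]

lemma frob_add_le {N : ℕ} (X Y : Matrix (Fin N) (Fin N) ℝ) :
    frobNorm (X + Y) ≤ frobNorm X + frobNorm Y := by
  rw [frob_eq, frob_eq, frob_eq]
  have : ((WithLp.equiv 2 (Fin N × Fin N → ℝ)).symm (fun p => (X + Y) p.1 p.2)) =
      (WithLp.equiv 2 (Fin N × Fin N → ℝ)).symm (fun p => X p.1 p.2) +
      (WithLp.equiv 2 (Fin N × Fin N → ℝ)).symm (fun p => Y p.1 p.2) := rfl
  rw [this]; exact norm_add_le _ _

lemma frob_smul {N : ℕ} (c : ℝ) (X : Matrix (Fin N) (Fin N) ℝ) :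
    frobNorm (c • X) = |c| * frobNorm X := by
  rw [frob_eq, frob_eq]
  have : ((WithLp.equiv 2 (Fin N × Fin N → ℝ)).symm (fun p => (c • X) p.1 p.2)) =
      c • (WithLp.equiv 2 (Fin N × Fin N → ℝ)).symm (fun p => X p.1 p.2) := rfl
  rw [this, norm_smul, Real.norm_eq_abs]

lemma frob_AMA_le (n : ℕ) (lam : ℝ) (h0 : 0 ≤ lam) (h1 : lam ≤ 1)
    (M : Matrix (Fin (n+1)) (Fin (n+1)) ℝ) :
    frobNorm (Adiag n lam * M * Adiag n lam) ≤ frobNorm M := by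
  apply Real.sqrt_le_sqrt
  apply Finset.sum_le_sum; intro i _
  apply Finset.sum_le_sum; intro j _
  have hij : (Adiag n lam * M * Adiag n lam) i j =
      (if i = Fin.last n then -lam else 1) * M i j * (if j = Fin.last n then -lam else 1) := by
    simp [Adiag, Matrix.diagonal_mul, Matrix.mul_diagonal]
  rw [hij]
  have h2 : ∀ b : Fin (n+1), ((if b = Fin.last n then -lam else 1 : ℝ))^2 ≤ 1 := by
    intro b; split <;> nlinarith
  nlinarith [h2 i, h2 j, sq_nonneg (M i j), sq_nonneg ((if i = Fin.last n then -lam else 1) * M i j)]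

/-- For `0 < μ < ν < 1`, `q := (1+ν)/(ν−μ)`, and `v` differentiable on
the open lower half-space `{xₙ < 0}` with Jacobian `Dv`, the function
`v̂(x) := q·A_μ v(A_μ x) + (1−q)·A_ν v(A_ν x)` is differentiable at every `x` with
`xₙ > 0`, with Jacobian `q·A_μ Dv(A_μ x) A_μ + (1−q)·A_ν Dv(A_ν x) A_ν`; its symmetric
gradient satisfies `e(v̂)(x) = q·A_μ e(v)(A_μ x) A_μ + (1−q)·A_ν e(v)(A_ν x) A_ν` and
`‖e(v̂)(x)‖_F ≤ q·‖e(v)(A_μ x)‖_F + (q−1)·‖e(v)(A_ν x)‖_F`. -/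
theorem stmt_12 (n : ℕ) (μ ν : ℝ) (h0 : 0 < μ) (hμν : μ < ν) (h1 : ν < 1)
    (q : ℝ) (hq : q = (1 + ν) / (ν - μ))
    (v : (Fin (n + 1) → ℝ) → (Fin (n + 1) → ℝ))
    (Dv : (Fin (n + 1) → ℝ) → Matrix (Fin (n + 1)) (Fin (n + 1)) ℝ)
    (hv : ∀ y : Fin (n + 1) → ℝ, y (Fin.last n) < 0 →
      HasFDerivAt v (LinearMap.toContinuousLinearMap (Dv y).mulVecLin) y)
    (x : Fin (n + 1) → ℝ) (hx : 0 < x (Fin.last n))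
    (Dhat : Matrix (Fin (n + 1)) (Fin (n + 1)) ℝ)
    (hDhat : Dhat = q • (Adiag n μ * Dv ((Adiag n μ).mulVec x) * Adiag n μ) +
      (1 - q) • (Adiag n ν * Dv ((Adiag n ν).mulVec x) * Adiag n ν)) :
    HasFDerivAt
        (fun y => q • (Adiag n μ).mulVec (v ((Adiag n μ).mulVec y)) +
          (1 - q) • (Adiag n ν).mulVec (v ((Adiag n ν).mulVec y)))
        (LinearMap.toContinuousLinearMap Dhat.mulVecLin) x ∧
      symPart Dhat = q • (Adiag n μ * symPart (Dv ((Adiag n μ).mulVec x)) * Adiag n μ) +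
          (1 - q) • (Adiag n ν * symPart (Dv ((Adiag n ν).mulVec x)) * Adiag n ν) ∧
      frobNorm (symPart Dhat) ≤
        q * frobNorm (symPart (Dv ((Adiag n μ).mulVec x))) +
          (q - 1) * frobNorm (symPart (Dv ((Adiag n ν).mulVec x))) := by
  have hq1 : 1 < q := by
    rw [hq]
    rw [lt_div_iff₀ (by linarith)]
    linarith
  -- A_λ x has negative last coordinate
  have hneg : ∀ lam : ℝ, 0 < lam → ((Adiag n lam).mulVec x) (Fin.last n) < 0 := by
    intro lam hl
    have : ((Adiag n lam).mulVec x) (Fin.last n) = -lam * x (Fin.last n) := by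
      simp [Adiag, Matrix.mulVec_diagonal]
    rw [this]; nlinarith
  set yμ := (Adiag n μ).mulVec x
  set yν := (Adiag n ν).mulVec x
  -- derivative part
  have hderiv : ∀ lam : ℝ, 0 < lam →
      HasFDerivAt (fun y => (Adiag n lam).mulVec (v ((Adiag n lam).mulVec y)))
        (LinearMap.toContinuousLinearMap
          (Adiag n lam * Dv ((Adiag n lam).mulVec x) * Adiag n lam).mulVecLin) x := by
    intro lam hl
    have hL : ∀ z, HasFDerivAt (fun y => (Adiag n lam).mulVec y)
        (LinearMap.toContinuousLinearMap (Adiag n lam).mulVecLin) z := fun z =>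
      (LinearMap.toContinuousLinearMap (Adiag n lam).mulVecLin).hasFDerivAt
    have h2 := (hv _ (hneg lam hl)).comp x (hL x)
    have h3 := (hL (v ((Adiag n lam).mulVec x))).comp x h2
    refine h3.congr_fderiv ?_
    ext y i
    simp [Matrix.mulVecLin_mul, LinearMap.comp_apply]
  have hμd := hderiv μ h0
  have hνd := hderiv ν (lt_trans h0 hμν)
  have hsum := (hμd.const_smul q).add (hνd.const_smul (1 - q))
  constructor
  · refine hsum.congr_fderiv ?_
    ext y i
    subst hDhat
    simp [Matrix.add_mulVec, Matrix.smul_mulVec, Matrix.mul_assoc]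
    rfl
  have heq : symPart Dhat = q • symPart (Adiag n μ * Dv yμ * Adiag n μ) +
        (1 - q) • symPart (Adiag n ν * Dv yν * Adiag n ν) := by
      subst hDhat
      simp only [symPart, Matrix.transpose_add, Matrix.transpose_smul]
      module
  constructor
  · rw [heq, symPart_AMA, symPart_AMA]
  · rw [heq]
    calc frobNorm (q • symPart (Adiag n μ * Dv yμ * Adiag n μ) +
        (1 - q) • symPart (Adiag n ν * Dv yν * Adiag n ν))
        ≤ frobNorm (q • symPart (Adiag n μ * Dv yμ * Adiag n μ)) +
          frobNorm ((1 - q) • symPart (Adiag n ν * Dv yν * Adiag n ν)) := frob_add_le _ _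
      _ = q * frobNorm (symPart (Adiag n μ * Dv yμ * Adiag n μ)) +
          (q - 1) * frobNorm (symPart (Adiag n ν * Dv yν * Adiag n ν)) := by
            rw [frob_smul, frob_smul, abs_of_pos (by linarith), abs_of_neg (by linarith)]
            ring
      _ ≤ q * frobNorm (symPart (Dv yμ)) + (q - 1) * frobNorm (symPart (Dv yν)) := by
            rw [symPart_AMA, symPart_AMA]
            have b1 := frob_AMA_le n μ (le_of_lt h0) (by linarith) (symPart (Dv yμ))
            have b2 := frob_AMA_le n ν (by linarith) (le_of_lt h1) (symPart (Dv yν))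
            have := mul_le_mul_of_nonneg_left b1 (le_of_lt (lt_trans one_pos hq1))
            have := mul_le_mul_of_nonneg_left b2 (by linarith : (0:ℝ) ≤ q - 1)
            linarith
end

section
/- Let Q̃ ⊂ ℝⁿ be a cube of sidelength 4/k (k a positive integer), let ω ⊂ Q̃ be measurable with λⁿ(ω) ≤ λⁿ(Q̃)/4, and let a, ã : ℝⁿ → ℝⁿ be affine maps. If ∫_{Q̃ \ ω} ‖a(x) − ã(x)‖ dx ≤ M, then sup_{x ∈ Q̃} ‖a(x) − ã(x)‖ ≤ C · kⁿ · M, where C > 0 depends only on the dimension n. -/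
open MeasureTheory

open Set Pointwise
open scoped ENNReal NNReal

namespace Stmt15

/-- The standard cube `(-2,2)^n`. -/
def Q0 (n : ℕ) : Set (EuclideanSpace ℝ (Fin n)) := {x | ∀ i, x i ∈ Set.Ioo (-2:ℝ) 2}

/-- Radius bound for the standard cube. -/
noncomputable def Rad (n : ℕ) : ℝ := 2 * Real.sqrt n

lemma Rad_nonneg (n : ℕ) : 0 ≤ Rad n := by unfold Rad; positivity

lemma norm_le_of_mem_Q0 {n : ℕ} {x : EuclideanSpace ℝ (Fin n)} (hx : x ∈ Q0 n) : ‖x‖ ≤ Rad n := by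
  rw [EuclideanSpace.norm_eq]
  have h1 : ∑ i, ‖x i‖ ^ 2 ≤ ∑ _i : Fin n, (4:ℝ) := by
    apply Finset.sum_le_sum
    intro i _
    have h := hx i
    have h2 : ‖x i‖ ≤ 2 := by
      rw [Real.norm_eq_abs, abs_le]
      exact ⟨by linarith [h.1], by linarith [h.2]⟩
    nlinarith [norm_nonneg (x i)]
  calc Real.sqrt (∑ i, ‖x i‖ ^ 2) ≤ Real.sqrt (∑ _i : Fin n, (4:ℝ)) := Real.sqrt_le_sqrt h1
    _ = Rad n := by
      rw [Finset.sum_const, Finset.card_univ, Fintype.card_fin, nsmul_eq_mul]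
      rw [show (n:ℝ) * 4 = (n:ℝ) * 2 ^ 2 by norm_num, Real.sqrt_mul (Nat.cast_nonneg n),
        Real.sqrt_sq (by norm_num : (0:ℝ) ≤ 2)]
      unfold Rad; ring

lemma Q0_subset_ball (n : ℕ) : Q0 n ⊆ Metric.closedBall 0 (Rad n) := fun _x hx =>
  mem_closedBall_zero_iff.2 (norm_le_of_mem_Q0 hx)

lemma isOpen_Q0 (n : ℕ) : IsOpen (Q0 n) := by
  have : Q0 n = ⋂ i, (fun x : EuclideanSpace ℝ (Fin n) => x i) ⁻¹' Set.Ioo (-2:ℝ) 2 := by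
    ext x; simp [Q0]
  rw [this]
  exact isOpen_iInter_of_finite fun i => isOpen_Ioo.preimage (EuclideanSpace.proj i).continuous

lemma measurableSet_Q0 (n : ℕ) : MeasurableSet (Q0 n) := (isOpen_Q0 n).measurableSet

lemma Q0_pos (n : ℕ) : 0 < volume (Q0 n) :=
  (isOpen_Q0 n).measure_pos volume ⟨0, fun i => by simp⟩

lemma Q0_fin (n : ℕ) : volume (Q0 n) ≠ ⊤ :=
  ((measure_mono (Q0_subset_ball n)).trans_lt measure_closedBall_lt_top).ne

lemma integrableOn_aux {n : ℕ} (A : EuclideanSpace ℝ (Fin n) →L[ℝ] EuclideanSpace ℝ (Fin n))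
    (b : EuclideanSpace ℝ (Fin n)) {s : Set (EuclideanSpace ℝ (Fin n))} (hs : s ⊆ Q0 n) :
    IntegrableOn (fun x => ‖A x + b‖) s volume := by
  have hc : Continuous fun x : EuclideanSpace ℝ (Fin n) => ‖A x + b‖ :=
    (A.continuous.add continuous_const).norm
  exact (hc.continuousOn.integrableOn_compact (isCompact_closedBall 0 (Rad n))).mono_set
    (hs.trans (Q0_subset_ball n))


lemma zeroset_null {n : ℕ} (A : EuclideanSpace ℝ (Fin n) →L[ℝ] EuclideanSpace ℝ (Fin n))
    (b : EuclideanSpace ℝ (Fin n)) (h : ¬(A = 0 ∧ b = 0)) :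
    volume {x : EuclideanSpace ℝ (Fin n) | A x + b = 0} = 0 := by
  by_cases hA : A = 0
  · have hb : b ≠ 0 := fun hb => h ⟨hA, hb⟩
    have : {x : EuclideanSpace ℝ (Fin n) | A x + b = 0} = ∅ := by
      ext x; simp [hA, hb]
    simp [this]
  · rcases Set.eq_empty_or_nonempty {x : EuclideanSpace ℝ (Fin n) | A x + b = 0} with he | ⟨x₀, hx₀⟩
    · simp [he]
    · have hx₀' : A x₀ + b = 0 := hx₀
      have hker : LinearMap.ker (A : EuclideanSpace ℝ (Fin n) →ₗ[ℝ] EuclideanSpace ℝ (Fin n)) ≠ ⊤ := by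
        intro hk
        apply hA
        apply ContinuousLinearMap.ext
        intro v
        have : v ∈ LinearMap.ker (A : EuclideanSpace ℝ (Fin n) →ₗ[ℝ] EuclideanSpace ℝ (Fin n)) := by
          rw [hk]; trivial
        simpa using this
      have hset : {x : EuclideanSpace ℝ (Fin n) | A x + b = 0} =
          (fun x => -x₀ + x) ⁻¹'
            (LinearMap.ker (A : EuclideanSpace ℝ (Fin n) →ₗ[ℝ] EuclideanSpace ℝ (Fin n)) :
              Set (EuclideanSpace ℝ (Fin n))) := by
        ext x
        simp only [Set.mem_preimage, SetLike.mem_coe, LinearMap.mem_ker, Set.mem_setOf_eq,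
          ContinuousLinearMap.coe_coe]
        rw [show -x₀ + x = x - x₀ by abel, map_sub]
        constructor
        · intro hx
          rw [eq_neg_of_add_eq_zero_left hx, eq_neg_of_add_eq_zero_left hx₀', sub_self]
        · intro hx
          have hxx : A x = A x₀ := by rwa [sub_eq_zero] at hx
          rw [hxx, hx₀']
      rw [hset, measure_preimage_add]
      exact Measure.addHaar_submodule volume _ hker

lemma sublevel {n : ℕ} (A : EuclideanSpace ℝ (Fin n) →L[ℝ] EuclideanSpace ℝ (Fin n))
    (b : EuclideanSpace ℝ (Fin n)) (h : ¬(A = 0 ∧ b = 0)) :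
    ∃ ε : ℝ, 0 < ε ∧
      volume (Q0 n ∩ {x | ‖A x + b‖ ≤ ε}) ≤ volume (Q0 n) / 2 := by
  set f : EuclideanSpace ℝ (Fin n) → ℝ := fun x => ‖A x + b‖ with hf
  have hfc : Continuous f := (A.continuous.add continuous_const).norm
  set s : ℕ → Set (EuclideanSpace ℝ (Fin n)) :=
    fun m => Q0 n ∩ {x | f x ≤ 1 / (m + 1)} with hs
  have hmeas : ∀ m, MeasurableSet (s m) := fun m =>
    (measurableSet_Q0 n).inter ((isClosed_le hfc continuous_const).measurableSet)
  have hanti : Antitone s := by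
    intro m m' hmm x hx
    refine ⟨hx.1, ?_⟩
    have hx2 : f x ≤ 1 / ((m' : ℝ) + 1) := hx.2
    show f x ≤ 1 / ((m : ℝ) + 1)
    refine le_trans hx2 (one_div_le_one_div_of_le (by positivity) ?_)
    have : (m : ℝ) ≤ (m' : ℝ) := Nat.cast_le.2 hmm
    linarith
  have hint : ⋂ m, s m ⊆ {x | A x + b = 0} := by
    intro x hx
    simp only [Set.mem_iInter] at hx
    have hle : f x ≤ 0 := by
      have ht : Filter.Tendsto (fun m : ℕ => 1 / ((m : ℝ) + 1)) Filter.atTop (nhds 0) :=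
        tendsto_one_div_add_atTop_nhds_zero_nat
      exact ge_of_tendsto' ht fun m => (hx m).2
    have : f x = 0 := le_antisymm hle (norm_nonneg _)
    simpa [hf] using this
  have hnull : volume (⋂ m, s m) = 0 :=
    measure_mono_null hint (zeroset_null A b h)
  have htend : Filter.Tendsto (fun m => volume (s m)) Filter.atTop (nhds 0) := by
    have := tendsto_measure_iInter_atTop (μ := volume) (s := s)
      (fun m => (hmeas m).nullMeasurableSet) hanti
      ⟨0, ((measure_mono (Set.inter_subset_left)).trans_lt (Q0_fin n).lt_top).ne⟩
    rwa [hnull] at this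
  have hhalfpos : (0:ℝ≥0∞) < volume (Q0 n) / 2 :=
    ENNReal.div_pos (Q0_pos n).ne' (by norm_num)
  have hev : ∀ᶠ m in Filter.atTop, volume (s m) < volume (Q0 n) / 2 :=
    htend.eventually_lt_const hhalfpos
  obtain ⟨m, hm⟩ := hev.exists
  exact ⟨1 / (m + 1), by positivity, hm.le⟩
abbrev Sp (n : ℕ) := EuclideanSpace ℝ (Fin n)
abbrev Wsp (n : ℕ) := (Sp n →L[ℝ] Sp n) × Sp n

/-- Admissible exceptional sets. -/
def Adm (n : ℕ) : Set (Set (Sp n)) :=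
  {ω | MeasurableSet ω ∧ ω ⊆ Q0 n ∧ volume ω ≤ volume (Q0 n) / 4}

noncomputable def Phi (n : ℕ) (w : Wsp n) : ℝ :=
  sInf ((fun ω => ∫ z in Q0 n \ ω, ‖w.1 z + w.2‖) '' Adm n)

lemma Adm_empty (n : ℕ) : ∅ ∈ Adm n := ⟨MeasurableSet.empty, Set.empty_subset _, by simp⟩

lemma Phi_nonempty (n : ℕ) (w : Wsp n) :
    ((fun ω => ∫ z in Q0 n \ ω, ‖w.1 z + w.2‖) '' Adm n).Nonempty :=
  ⟨_, ⟨∅, Adm_empty n, rfl⟩⟩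

lemma Phi_bddBelow (n : ℕ) (w : Wsp n) :
    BddBelow ((fun ω => ∫ z in Q0 n \ ω, ‖w.1 z + w.2‖) '' Adm n) := by
  refine ⟨0, ?_⟩
  rintro r ⟨ω, hω, rfl⟩
  exact integral_nonneg fun z => norm_nonneg _

lemma Phi_le (n : ℕ) (w : Wsp n) {ω : Set (Sp n)} (hω : ω ∈ Adm n) :
    Phi n w ≤ ∫ z in Q0 n \ ω, ‖w.1 z + w.2‖ :=
  csInf_le (Phi_bddBelow n w) ⟨ω, hω, rfl⟩

lemma le_Phi (n : ℕ) (w : Wsp n) {B : ℝ}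
    (hB : ∀ ω ∈ Adm n, B ≤ ∫ z in Q0 n \ ω, ‖w.1 z + w.2‖) : B ≤ Phi n w :=
  le_csInf (Phi_nonempty n w) (by rintro r ⟨ω, hω, rfl⟩; exact hB ω hω)

lemma ptwise {n : ℕ} (w w' : Wsp n) {x : Sp n} (hx : x ∈ Q0 n) :
    ‖w.1 x + w.2‖ ≤ ‖w'.1 x + w'.2‖ + (Rad n + 1) * dist w w' := by
  have h1 : w.1 x + w.2 = (w'.1 x + w'.2) + ((w.1 - w'.1) x + (w.2 - w'.2)) := by
    simp only [ContinuousLinearMap.sub_apply]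
    abel
  have h2 : ‖(w.1 - w'.1) x‖ ≤ ‖w - w'‖ * Rad n := by
    calc ‖(w.1 - w'.1) x‖ ≤ ‖w.1 - w'.1‖ * ‖x‖ := (w.1 - w'.1).le_opNorm x
      _ ≤ ‖w - w'‖ * Rad n := by
        apply mul_le_mul _ (norm_le_of_mem_Q0 hx) (norm_nonneg _) (norm_nonneg _)
        exact norm_fst_le (w - w')
  have h3 : ‖w.2 - w'.2‖ ≤ ‖w - w'‖ := norm_snd_le (w - w')
  have h4 : dist w w' = ‖w - w'‖ := dist_eq_norm w w'
  calc ‖w.1 x + w.2‖ ≤ ‖w'.1 x + w'.2‖ + ‖(w.1 - w'.1) x + (w.2 - w'.2)‖ := by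
        rw [h1]; exact norm_add_le _ _
    _ ≤ ‖w'.1 x + w'.2‖ + (‖(w.1 - w'.1) x‖ + ‖w.2 - w'.2‖) := by
        gcongr; exact norm_add_le _ _
    _ ≤ ‖w'.1 x + w'.2‖ + (Rad n + 1) * dist w w' := by
        rw [h4]; nlinarith [norm_nonneg (w - w')]

lemma Phi_lipschitz (n : ℕ) (w w' : Wsp n) :
    Phi n w ≤ Phi n w' + ((volume (Q0 n)).toReal * (Rad n + 1)) * dist w w' := by
  have hkey : ∀ ω ∈ Adm n, Phi n w - ((volume (Q0 n)).toReal * (Rad n + 1)) * dist w w'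
      ≤ ∫ z in Q0 n \ ω, ‖w'.1 z + w'.2‖ := by
    intro ω hω
    have hsub : Q0 n \ ω ⊆ Q0 n := Set.diff_subset
    have hmevs : MeasurableSet (Q0 n \ ω) := (measurableSet_Q0 n).diff hω.1
    have hint : IntegrableOn (fun z => ‖w.1 z + w.2‖) (Q0 n \ ω) volume :=
      integrableOn_aux _ _ hsub
    have hint' : IntegrableOn (fun z => ‖w'.1 z + w'.2‖) (Q0 n \ ω) volume :=
      integrableOn_aux _ _ hsub
    have hfin : volume (Q0 n \ ω) ≠ ⊤ := ((measure_mono hsub).trans_lt (Q0_fin n).lt_top).ne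
    have hconst : IntegrableOn (fun _ => (Rad n + 1) * dist w w') (Q0 n \ ω) volume :=
      integrableOn_const hfin
    have step1 : ∫ z in Q0 n \ ω, ‖w.1 z + w.2‖
        ≤ ∫ z in Q0 n \ ω, (‖w'.1 z + w'.2‖ + (Rad n + 1) * dist w w') :=
      setIntegral_mono_on hint (hint'.add hconst) hmevs fun x hxm => ptwise w w' (hsub hxm)
    have step2 : ∫ z in Q0 n \ ω, (‖w'.1 z + w'.2‖ + (Rad n + 1) * dist w w')
        = (∫ z in Q0 n \ ω, ‖w'.1 z + w'.2‖)
          + (volume (Q0 n \ ω)).toReal * ((Rad n + 1) * dist w w') := by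
      rw [integral_add hint' hconst, setIntegral_const, smul_eq_mul]; rfl
    have step3 : (volume (Q0 n \ ω)).toReal * ((Rad n + 1) * dist w w')
        ≤ (volume (Q0 n)).toReal * (Rad n + 1) * dist w w' := by
      have h1 : (volume (Q0 n \ ω)).toReal ≤ (volume (Q0 n)).toReal :=
        ENNReal.toReal_mono (Q0_fin n) (measure_mono hsub)
      have h5 := dist_nonneg (x := w) (y := w')
      have h6 := Rad_nonneg n
      calc (volume (Q0 n \ ω)).toReal * ((Rad n + 1) * dist w w')
          = ((volume (Q0 n \ ω)).toReal * (Rad n + 1)) * dist w w' := by ring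
        _ ≤ ((volume (Q0 n)).toReal * (Rad n + 1)) * dist w w' := by
            apply mul_le_mul_of_nonneg_right _ h5
            exact mul_le_mul_of_nonneg_right h1 (by linarith)
    have h7 := Phi_le n w hω
    linarith
  have h8 := le_Phi n w' hkey
  linarith

lemma Phi_continuous (n : ℕ) : Continuous (Phi n) := by
  have hnn : 0 ≤ (volume (Q0 n)).toReal * (Rad n + 1) :=
    mul_nonneg ENNReal.toReal_nonneg (by linarith [Rad_nonneg n])
  have : LipschitzWith (Real.toNNReal ((volume (Q0 n)).toReal * (Rad n + 1))) (Phi n) := by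
    apply LipschitzWith.of_le_add_mul
    intro x y
    have h := Phi_lipschitz n x y
    rw [Real.coe_toNNReal _ hnn]
    linarith
  exact this.continuous
lemma Phi_pos {n : ℕ} (w : Wsp n) (hw : w ≠ 0) : 0 < Phi n w := by
  have hAb : ¬(w.1 = 0 ∧ w.2 = 0) := by
    rintro ⟨h1, h2⟩
    exact hw (Prod.ext h1 h2)
  obtain ⟨ε, hε, hεvol⟩ := sublevel w.1 w.2 hAb
  set S : Set (Sp n) := {x | ‖w.1 x + w.2‖ ≤ ε} with hSdef
  set ar := (volume (Q0 n)).toReal with har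
  have harpos : 0 < ar := ENNReal.toReal_pos (Q0_pos n).ne' (Q0_fin n)
  refine lt_of_lt_of_le (show (0:ℝ) < ε * (ar / 4) by positivity) (le_Phi n w ?_)
  intro ω hω
  set G := (Q0 n \ ω) \ S with hG
  have hSclosed : MeasurableSet S :=
    (isClosed_le (w.1.continuous.add continuous_const).norm continuous_const).measurableSet
  have hGm : MeasurableSet G := ((measurableSet_Q0 n).diff hω.1).diff hSclosed
  have hGsub : G ⊆ Q0 n := fun x hx => hx.1.1
  have hGfin : volume G ≠ ⊤ := ((measure_mono hGsub).trans_lt (Q0_fin n).lt_top).ne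
  have hωfin : volume ω ≠ ⊤ := ((measure_mono hω.2.1).trans_lt (Q0_fin n).lt_top).ne
  have hSfin : volume (Q0 n ∩ S) ≠ ⊤ :=
    ((measure_mono Set.inter_subset_left).trans_lt (Q0_fin n).lt_top).ne
  have hcover : Q0 n ⊆ G ∪ ω ∪ (Q0 n ∩ S) := by
    intro x hx
    by_cases hxω : x ∈ ω
    · exact Or.inl (Or.inr hxω)
    by_cases hxε : x ∈ S
    · exact Or.inr ⟨hx, hxε⟩
    · exact Or.inl (Or.inl ⟨⟨hx, hxω⟩, hxε⟩)
  have hm1 : volume (Q0 n) ≤ volume G + volume ω + volume (Q0 n ∩ S) :=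
    le_trans (measure_mono hcover)
      (le_trans (measure_union_le _ _) (add_le_add_left (measure_union_le _ _) _))
  have hsumfin : volume G + volume ω + volume (Q0 n ∩ S) ≠ ⊤ :=
    ENNReal.add_ne_top.2 ⟨ENNReal.add_ne_top.2 ⟨hGfin, hωfin⟩, hSfin⟩
  have h2 : ar ≤ (volume G).toReal + (volume ω).toReal + (volume (Q0 n ∩ S)).toReal := by
    have h3 := ENNReal.toReal_mono hsumfin hm1
    rwa [ENNReal.toReal_add (ENNReal.add_ne_top.2 ⟨hGfin, hωfin⟩) hSfin,
      ENNReal.toReal_add hGfin hωfin] at h3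
  have hfour : ((4:ℝ≥0∞)).toReal = 4 := by simp
  have htwo : ((2:ℝ≥0∞)).toReal = 2 := by simp
  have hω4 : (volume ω).toReal ≤ ar / 4 := by
    have h4 := ENNReal.toReal_mono (by simp [ENNReal.div_eq_top, Q0_fin n]) hω.2.2
    rwa [ENNReal.toReal_div, hfour] at h4
  have hS2 : (volume (Q0 n ∩ S)).toReal ≤ ar / 2 := by
    have h4 := ENNReal.toReal_mono (by simp [ENNReal.div_eq_top, Q0_fin n]) hεvol
    rwa [ENNReal.toReal_div, htwo] at h4
  have hGge : ar / 4 ≤ (volume G).toReal := by linarith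
  have hintQ : IntegrableOn (fun z => ‖w.1 z + w.2‖) (Q0 n \ ω) volume :=
    integrableOn_aux _ _ Set.diff_subset
  have hmono : ∫ z in G, ‖w.1 z + w.2‖ ≤ ∫ z in Q0 n \ ω, ‖w.1 z + w.2‖ :=
    setIntegral_mono_set hintQ (ae_of_all _ fun z => norm_nonneg _)
      (HasSubset.Subset.eventuallyLE fun x hx => hx.1)
  have hconst : ε * (volume G).toReal ≤ ∫ z in G, ‖w.1 z + w.2‖ :=
    by have := setIntegral_ge_of_const_le hGm hGfin (fun x hx => (not_le.1 hx.2).le)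
         (integrableOn_aux _ _ hGsub)
       rw [smul_eq_mul, mul_comm] at this; exact this
  calc ε * (ar / 4) ≤ ε * (volume G).toReal := mul_le_mul_of_nonneg_left hGge hε.le
    _ ≤ ∫ z in G, ‖w.1 z + w.2‖ := hconst
    _ ≤ ∫ z in Q0 n \ ω, ‖w.1 z + w.2‖ := hmono
lemma key (n : ℕ) :
    ∃ c : ℝ, 0 < c ∧
      ∀ (A : Sp n →L[ℝ] Sp n) (b : Sp n) (ω : Set (Sp n)),
        MeasurableSet ω → ω ⊆ Q0 n → volume ω ≤ volume (Q0 n) / 4 →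
        ∀ x ∈ Q0 n, ‖A x + b‖ ≤ c * ∫ z in Q0 n \ ω, ‖A z + b‖ := by
  by_cases hsph : (Metric.sphere (0 : Wsp n) 1).Nonempty
  · obtain ⟨w₀, hw₀mem, hw₀min⟩ :=
      (isCompact_sphere (0 : Wsp n) 1).exists_isMinOn hsph (Phi_continuous n).continuousOn
    have hw₀ : w₀ ≠ 0 := by
      intro h0
      have := mem_sphere_zero_iff_norm.1 hw₀mem
      rw [h0] at this
      simp at this
    set c' := Phi n w₀ with hc'
    have hc'pos : 0 < c' := Phi_pos w₀ hw₀
    refine ⟨(Rad n + 1) / c', div_pos (by linarith [Rad_nonneg n]) hc'pos, ?_⟩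
    intro A b ω hmeas hsub hvol x hx
    set w : Wsp n := (A, b) with hwdef
    by_cases hw : w = 0
    · have hA : A = 0 := congrArg Prod.fst hw
      have hb : b = 0 := congrArg Prod.snd hw
      have hintz : ∫ z in Q0 n \ ω, ‖A z + b‖ = 0 := by
        simp [hA, hb]
      rw [hintz, hA, hb]
      simp
    · have hwn : 0 < ‖w‖ := norm_pos_iff.2 hw
      set u : Wsp n := ‖w‖⁻¹ • w with hu
      have humem : u ∈ Metric.sphere (0 : Wsp n) 1 :=
        mem_sphere_zero_iff_norm.2 (norm_smul_inv_norm hw)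
      have hrw : ∀ z : Sp n, ‖u.1 z + u.2‖ = ‖w‖⁻¹ * ‖A z + b‖ := by
        intro z
        have h1 : u.1 z + u.2 = ‖w‖⁻¹ • (A z + b) := by
          simp [hu, hwdef, smul_add]
        rw [h1, norm_smul, Real.norm_eq_abs, abs_of_pos (inv_pos.2 hwn)]
      have hωA : ω ∈ Adm n := ⟨hmeas, hsub, hvol⟩
      have hPhiu : c' ≤ Phi n u := hw₀min humem
      have hchain : c' ≤ ‖w‖⁻¹ * ∫ z in Q0 n \ ω, ‖A z + b‖ := by
        have h2 := Phi_le n u hωA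
        have h3 : ∫ z in Q0 n \ ω, ‖u.1 z + u.2‖
            = ‖w‖⁻¹ * ∫ z in Q0 n \ ω, ‖A z + b‖ := by
          simp_rw [hrw]
          exact integral_const_mul _ _
        rw [h3] at h2
        linarith
      have hIw : c' * ‖w‖ ≤ ∫ z in Q0 n \ ω, ‖A z + b‖ := by
        have := mul_le_mul_of_nonneg_left hchain hwn.le
        rwa [← mul_assoc, mul_inv_cancel₀ hwn.ne', one_mul, mul_comm ‖w‖ c'] at this
      have hlhs : ‖A x + b‖ ≤ (Rad n + 1) * ‖w‖ := by
        have h4 : ‖A x‖ ≤ ‖A‖ * ‖x‖ := A.le_opNorm x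
        have h5 : ‖A‖ ≤ ‖w‖ := norm_fst_le w
        have h6 : ‖b‖ ≤ ‖w‖ := norm_snd_le w
        have h7 : ‖x‖ ≤ Rad n := norm_le_of_mem_Q0 hx
        calc ‖A x + b‖ ≤ ‖A x‖ + ‖b‖ := norm_add_le _ _
          _ ≤ (Rad n + 1) * ‖w‖ := by nlinarith [norm_nonneg (A : Sp n →L[ℝ] Sp n), norm_nonneg x]
      calc ‖A x + b‖ ≤ (Rad n + 1) * ‖w‖ := hlhs
        _ = ((Rad n + 1) / c') * (c' * ‖w‖) := by field_simp
        _ ≤ ((Rad n + 1) / c') * ∫ z in Q0 n \ ω, ‖A z + b‖ := by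
            apply mul_le_mul_of_nonneg_left hIw
            exact div_nonneg (by linarith [Rad_nonneg n]) hc'pos.le
  · refine ⟨1, one_pos, ?_⟩
    intro A b ω hmeas hsub hvol x hx
    have hw0 : ((A, b) : Wsp n) = 0 := by
      by_contra h
      exact hsph ⟨_, mem_sphere_zero_iff_norm.2 (norm_smul_inv_norm (𝕜 := ℝ) h)⟩
    have hA : A = 0 := congrArg Prod.fst hw0
    have hb : b = 0 := congrArg Prod.snd hw0
    have hintz : ∫ z in Q0 n \ ω, ‖A z + b‖ = 0 := by simp [hA, hb]
    rw [hintz, hA, hb]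
    simp
end Stmt15

open Stmt15 in
/-- There is `C > 0` depending only on the dimension `n` such that:
for every cube `Q̃` of sidelength `4/k`, every measurable `ω ⊆ Q̃` with
`λⁿ(ω) ≤ λⁿ(Q̃)/4`, and all affine maps `a, a' : ℝⁿ → ℝⁿ`, if
`∫_{Q̃ \ ω} ‖a − a'‖ ≤ M` then `sup_{Q̃} ‖a − a'‖ ≤ C·kⁿ·M`. -/
theorem stmt_15 (n : ℕ) :
    ∃ C : ℝ, 0 < C ∧
      ∀ (k : ℕ), 0 < k →
        ∀ (x₀ : EuclideanSpace ℝ (Fin n)) (Q : Set (EuclideanSpace ℝ (Fin n))),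
          Q = {x | ∀ i, x i ∈ Set.Ioo (x₀ i - (2 : ℝ) / k) (x₀ i + (2 : ℝ) / k)} →
          ∀ ω : Set (EuclideanSpace ℝ (Fin n)), MeasurableSet ω → ω ⊆ Q →
            volume ω ≤ volume Q / 4 →
            ∀ (a a' : EuclideanSpace ℝ (Fin n) →ᵃ[ℝ] EuclideanSpace ℝ (Fin n)) (M : ℝ),
              (∫ x in Q \ ω, ‖a x - a' x‖) ≤ M →
              (⨆ x ∈ Q, ‖a x - a' x‖) ≤ C * k ^ n * M := by
  obtain ⟨c, hc, hkey⟩ := Stmt15.key n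
  refine ⟨c, hc, ?_⟩
  intro k hk x₀ Q hQ ω hωmeas hωsub hωvol a a' M hM
  have hkR : (0:ℝ) < (k:ℝ) := Nat.cast_pos.2 hk
  set kR : ℝ := (k:ℝ) with hkRdef
  have hki : (0:ℝ) < kR⁻¹ := inv_pos.2 hkR
  set T : Sp n → Sp n := fun y => x₀ + kR⁻¹ • y with hT
  -- coordinatewise characterization
  have hcoord : ∀ t s : ℝ,
      (t - 2 / kR < t + kR⁻¹ * s ∧ t + kR⁻¹ * s < t + 2 / kR) ↔ (-2 < s ∧ s < 2) := by
    intro t s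
    have h2 : 2 / kR = kR⁻¹ * 2 := by rw [div_eq_inv_mul]
    constructor
    · rintro ⟨hl, hr⟩
      rw [h2] at hl hr
      have h1 : kR⁻¹ * s < kR⁻¹ * 2 := by linarith
      have h1' : kR⁻¹ * (-2) < kR⁻¹ * s := by linarith
      exact ⟨(mul_lt_mul_iff_right₀ hki).1 h1', (mul_lt_mul_iff_right₀ hki).1 h1⟩
    · rintro ⟨hl, hr⟩
      have h1 := (mul_lt_mul_iff_right₀ hki).2 hr
      have h1' := (mul_lt_mul_iff_right₀ hki).2 hl
      rw [h2]
      constructor <;> linarith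
  have hTQiff : ∀ y : Sp n, T y ∈ Q ↔ y ∈ Q0 n := by
    intro y
    rw [hQ]
    show (∀ i, (x₀ + kR⁻¹ • y) i ∈ Set.Ioo _ _) ↔ ∀ i, y i ∈ Set.Ioo (-2:ℝ) 2
    refine forall_congr' fun i => ?_
    have := hcoord (x₀ i) (y i)
    simp only [Set.mem_Ioo, PiLp.add_apply, PiLp.smul_apply, smul_eq_mul]
    exact this
  have hQ0T : Q0 n = T ⁻¹' Q := by
    ext y
    exact (hTQiff y).symm
  set ω' : Set (Sp n) := T ⁻¹' ω with hω'
  have hTcont : Continuous T := continuous_const.add (continuous_id.const_smul kR⁻¹)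
  have hm' : MeasurableSet ω' := hωmeas.preimage hTcont.measurable
  have hsub' : ω' ⊆ Q0 n := fun y hy => (hTQiff y).1 (hωsub hy)
  have hscale : ∀ s : Set (Sp n), volume (T ⁻¹' s) = ENNReal.ofReal (kR ^ n) * volume s := by
    intro s
    have h1 : T ⁻¹' s = (kR⁻¹ • ·) ⁻¹' ((fun u => x₀ + u) ⁻¹' s) := rfl
    rw [h1, Measure.addHaar_preimage_smul volume (inv_ne_zero hkR.ne') _, measure_preimage_add]
    congr 1
    rw [finrank_euclideanSpace_fin, inv_pow, inv_inv, abs_of_pos (pow_pos hkR n)]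
  have hvol' : volume ω' ≤ volume (Q0 n) / 4 := by
    have hQvol : volume (Q0 n) = ENNReal.ofReal (kR ^ n) * volume Q := by
      rw [hQ0T]; exact hscale Q
    rw [hω', hscale ω, hQvol]
    calc ENNReal.ofReal (kR ^ n) * volume ω
        ≤ ENNReal.ofReal (kR ^ n) * (volume Q / 4) := mul_le_mul_right hωvol _
      _ = ENNReal.ofReal (kR ^ n) * volume Q / 4 := by rw [mul_div_assoc]
  -- the affine difference
  set d := a - a' with hddef
  have hd : ∀ x, d x = a x - a' x := by
    intro x
    rw [hddef]
    simp [AffineMap.coe_sub]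
  set dL := LinearMap.toContinuousLinearMap d.linear with hdL
  set A₀ : Sp n →L[ℝ] Sp n := kR⁻¹ • dL with hA₀
  set b₀ : Sp n := d x₀ with hb₀
  have heq : ∀ z : Sp n, A₀ z + b₀ = d (T z) := by
    intro z
    have h1 : d (T z) = d.linear (kR⁻¹ • z) + d x₀ := by
      have h2 := d.map_vadd x₀ (kR⁻¹ • z)
      rw [hT]
      show d (x₀ + kR⁻¹ • z) = _
      rw [show x₀ + kR⁻¹ • z = (kR⁻¹ • z) +ᵥ x₀ from add_comm _ _, h2]
      rfl
    rw [h1, d.linear.map_smul]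
    simp [hA₀, hdL, hb₀]
  have hQdiff : Q0 n \ ω' = T ⁻¹' (Q \ ω) := by
    rw [hQ0T, hω', Set.preimage_diff]
  have hInn : (0:ℝ) ≤ ∫ x in Q \ ω, ‖a x - a' x‖ := integral_nonneg fun x => norm_nonneg _
  have hMnn : 0 ≤ M := le_trans hInn hM
  have hint : ∫ z in Q0 n \ ω', ‖d (T z)‖ = kR ^ n * ∫ x in Q \ ω, ‖d x‖ := by
    rw [hQdiff]
    have h1 : ∫ z in T ⁻¹' (Q \ ω), ‖d (T z)‖
        = ∫ z in (kR⁻¹ • ·) ⁻¹' ((fun u => x₀ + u) ⁻¹' (Q \ ω)),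
            (fun u => ‖d (x₀ + u)‖) (kR⁻¹ • z) := rfl
    rw [h1, Measure.setIntegral_comp_smul_of_pos volume (fun u => ‖d (x₀ + u)‖)
      ((fun x => kR⁻¹ • x) ⁻¹' ((fun u => x₀ + u) ⁻¹' (Q \ ω))) hki]
    have h2 : kR⁻¹ • ((kR⁻¹ • ·) ⁻¹' ((fun u => x₀ + u) ⁻¹' (Q \ ω)))
        = (fun u => x₀ + u) ⁻¹' (Q \ ω) := by
      rw [show ((kR⁻¹ • ·) : Sp n → Sp n) = (fun x : Sp n => kR⁻¹ • x) from rfl,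
        preimage_smul_inv₀ hkR.ne', smul_smul, inv_mul_cancel₀ hkR.ne', one_smul]
    rw [h2]
    have h3 : ∫ u in (fun u => x₀ + u) ⁻¹' (Q \ ω), ‖d (x₀ + u)‖ = ∫ x in Q \ ω, ‖d x‖ :=
      (measurePreserving_add_left volume x₀).setIntegral_preimage_emb
        (MeasurableEquiv.addLeft x₀).measurableEmbedding (fun x => ‖d x‖) (Q \ ω)
    rw [h3, finrank_euclideanSpace_fin, inv_pow, inv_inv, smul_eq_mul]
  have hfinal : ∀ x ∈ Q, ‖a x - a' x‖ ≤ c * kR ^ n * M := by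
    intro x hx
    set y : Sp n := kR • (x - x₀) with hy'
    have hTy : T y = x := by
      rw [hT, hy']
      show x₀ + kR⁻¹ • (kR • (x - x₀)) = x
      rw [smul_smul, inv_mul_cancel₀ hkR.ne', one_smul, add_sub_cancel]
    have hy : y ∈ Q0 n := (hTQiff y).1 (by rw [hTy]; exact hx)
    have hb := hkey A₀ b₀ ω' hm' hsub' hvol' y hy
    rw [heq y, hTy] at hb
    have h4 : ∫ z in Q0 n \ ω', ‖A₀ z + b₀‖ = ∫ z in Q0 n \ ω', ‖d (T z)‖ := by
      apply setIntegral_congr_fun ((measurableSet_Q0 n).diff hm')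
      intro z _
      show ‖A₀ z + b₀‖ = ‖d (T z)‖
      rw [heq z]
    rw [h4, hint] at hb
    have h5 : ∫ x in Q \ ω, ‖d x‖ ≤ M := by
      have : (fun x => ‖d x‖) = fun x => ‖a x - a' x‖ := by
        funext x; rw [hd x]
      rw [this]
      exact hM
    calc ‖a x - a' x‖ = ‖d x‖ := by rw [hd x]
      _ ≤ c * (kR ^ n * ∫ x in Q \ ω, ‖d x‖) := hb
      _ ≤ c * (kR ^ n * M) := by
          apply mul_le_mul_of_nonneg_left _ hc.le
          exact mul_le_mul_of_nonneg_left h5 (pow_nonneg hkR.le n)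
      _ = c * kR ^ n * M := by ring
  have hCnn : 0 ≤ c * (k:ℝ) ^ n * M :=
    mul_nonneg (mul_nonneg hc.le (pow_nonneg hkR.le n)) hMnn
  refine Real.iSup_le (fun x => Real.iSup_le (fun hx => ?_) hCnn) hCnn
  exact hfinal x hx
end
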